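/- arXiv:math/0009220 — 2 statements merged into one kernel-verified Lean document; each statement's English description precedes it below -/
import Mathlib

section
/- Let A = Λ(y₁,y₂) ⊗ ℤ₂⟨t,x₁,x₂⟩/R over ℤ₂, where Λ(y₁,y₂) is the exterior algebra on generators y₁,y₂ (of degrees 1,2), ℤ₂⟨t,x₁,x₂⟩ is the free noncommutative ℤ₂-algebra on t,x₁,x₂ (degrees 1,1,2), and R is the two-sided ideal generated by t², x₁², x₂², and x₁x₂ - x₂x₁. Then every element of A is a ℤ₂-linear combination of elements of the form w_I · t^{ε_t} · x_i^{ε_i} · y_j^{η_j}, where ε_t, ε_i, η_j ∈ {0,1}, w_I = w_{i₁}⋯w_{i_n} is a word in w₁ = x₁t + tx₁, w₂ = x₂t + tx₂, w₃ = x₃t + tx₃ (with x₃ = x₁x₂, y₃ = y₁y₂), and i,j ∈ {1,2,3}. -/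
/-!
The ℤ₂-algebra `A = Λ(y₁,y₂) ⊗ ℤ₂⟨t,x₁,x₂⟩ / R` from Anjos,
"Homotopy type of symplectomorphism groups of S² × S²".
Generators of the free algebra: `0 ↦ t`, `1 ↦ x₁`, `2 ↦ x₂`, `3 ↦ y₁`, `4 ↦ y₂`.
Relations: `t² = x₁² = x₂² = 0`, `x₁x₂ = x₂x₁` (the ideal R), together with the
exterior-algebra relations `y₁² = y₂² = 0`, `y₁y₂ = y₂y₁` and the fact that the
`yᵢ` commute with `t, x₁, x₂` (tensor product).
-/

noncomputable section
open FreeAlgebra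

abbrev F2 := ZMod 2
abbrev FA := FreeAlgebra F2 (Fin 5)

inductive ARel : FA → FA → Prop
  | t2 : ARel (ι F2 0 * ι F2 0) 0
  | x1sq : ARel (ι F2 1 * ι F2 1) 0
  | x2sq : ARel (ι F2 2 * ι F2 2) 0
  | xcomm : ARel (ι F2 1 * ι F2 2) (ι F2 2 * ι F2 1)
  | y1sq : ARel (ι F2 3 * ι F2 3) 0
  | y2sq : ARel (ι F2 4 * ι F2 4) 0
  | ycomm : ARel (ι F2 3 * ι F2 4) (ι F2 4 * ι F2 3)
  | ycentral (i : Fin 3) (j : Fin 2) :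
      ARel (ι F2 (Fin.castLE (by omega) i) * ι F2 (3 + Fin.castLE (by omega) j))
           (ι F2 (3 + Fin.castLE (by omega) j) * ι F2 (Fin.castLE (by omega) i))

/-- The algebra `A = Λ(y₁,y₂) ⊗ ℤ₂⟨t,x₁,x₂⟩ / R`. -/
abbrev A := RingQuot ARel

def g (i : Fin 5) : A := RingQuot.mkAlgHom F2 ARel (ι F2 i)

/-- the degree-1 generator `t` -/
def t : A := g 0
/-- `xg 0 = x₁` (deg 1), `xg 1 = x₂` (deg 2), `xg 2 = x₃ = x₁x₂` (deg 3) -/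
def xg : Fin 3 → A := ![g 1, g 2, g 1 * g 2]
/-- `yg 0 = y₁` (deg 1), `yg 1 = y₂` (deg 2), `yg 2 = y₃ = y₁y₂` (deg 3) -/
def yg : Fin 3 → A := ![g 3, g 4, g 3 * g 4]
/-- `w i = xᵢ₊₁ t + t xᵢ₊₁` for `i = 0,1,2` (the commutators `w₁,w₂,w₃`) -/
def w (i : Fin 3) : A := xg i * t + t * xg i
/-- the word `w_I = w_{i₁} ⋯ w_{i_n}` -/
def wWord (I : List (Fin 3)) : A := (I.map w).prod

/-!
The span of the monomials `w_I t^ε xᵢ yⱼ` contains `1`, so it is all of `A` once it is closed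
under right multiplication by the generators. The `yⱼ` commute with `t` and the `xᵢ`, the
`xᵢ` (and likewise the `yⱼ`) multiply among themselves to `0` or `x₃`, and `t² = 0`. The one
case that produces a new monomial is `xᵢ t = wᵢ + t xᵢ` (characteristic 2): since `t² = 0`,
`wᵢ` commutes with `t`, so it moves past `t^ε` and extends the word `w_I`.
-/

theorem add_self_eq_zero_of_zmod_two {M : Type*} [AddCommGroup M] [Module (ZMod 2) M] (x : M) :
    x + x = 0 := by
  rw [← two_smul (ZMod 2) x, show (2 : ZMod 2) = 0 from rfl, zero_smul]

theorem Submodule.eq_top_of_one_mem_of_mul_mem {R B : Type*} [CommSemiring R] [Semiring B]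
    [Algebra R B] {s : Set B} (hs : Algebra.adjoin R s = ⊤) {S : Submodule R B} (h1 : 1 ∈ S)
    (hmul : ∀ a ∈ S, ∀ x ∈ s, a * x ∈ S) : S = ⊤ := by
  suffices h : ∀ x ∈ Algebra.adjoin R s, ∀ a ∈ S, a * x ∈ S from
    eq_top_iff.2 fun x _ ↦ by simpa using h x (hs ▸ Algebra.mem_top) 1 h1
  intro x hx
  induction hx using Algebra.adjoin_induction with
  | mem x hx => exact fun a ha ↦ hmul a ha x hx
  | algebraMap r =>
    exact fun a ha ↦ by simpa [Algebra.algebraMap_eq_smul_one] using S.smul_mem r ha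
  | add x y _ _ hx hy => exact fun a ha ↦ by simpa [mul_add] using S.add_mem (hx a ha) (hy a ha)
  | mul x y _ _ hx hy => exact fun a ha ↦ by simpa [mul_assoc] using hy _ (hx a ha)

theorem RingQuot.adjoin_range_mkAlgHom_ι {R X : Type*} [CommSemiring R]
    (r : FreeAlgebra R X → FreeAlgebra R X → Prop) :
    Algebra.adjoin R (Set.range fun x ↦ RingQuot.mkAlgHom R r (ι R x)) = ⊤ := by
  rw [Set.range_comp', Algebra.adjoin_image, FreeAlgebra.adjoin_range_ι, Algebra.map_top,
    AlgHom.range_eq_top]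
  exact RingQuot.mkAlgHom_surjective R r

section Triple

variable {R : Type*} [Semiring R] {a b c : R}

theorem triple_mul_eq_zero_or (ha : a * a = 0) (hb : b * b = 0) (hab : Commute a b)
    (j k : Fin 3) : ![a, b, a * b] j * ![a, b, a * b] k = 0 ∨
      ![a, b, a * b] j * ![a, b, a * b] k = a * b := by
  have hba : b * a = a * b := hab.eq.symm
  fin_cases j <;> fin_cases k <;>
    simp [← mul_assoc, ha, hb, hba, mul_assoc a b a, mul_assoc a b b]

theorem Option.elim_triple_mul_eq_zero_or (ha : a * a = 0) (hb : b * b = 0) (hab : Commute a b)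
    (ix : Option (Fin 3)) (k : Fin 3) :
    ix.elim 1 ![a, b, a * b] * ![a, b, a * b] k = 0 ∨
      ∃ ix' : Option (Fin 3), ix.elim 1 ![a, b, a * b] * ![a, b, a * b] k =
        ix'.elim 1 ![a, b, a * b] := by
  cases ix with
  | none => exact Or.inr ⟨some k, one_mul _⟩
  | some j => exact (triple_mul_eq_zero_or ha hb hab j k).imp_right fun h ↦ ⟨some 2, h⟩

theorem Commute.triple (hca : Commute c a) (hcb : Commute c b) (k : Fin 3) :
    Commute c (![a, b, a * b] k) := by
  fin_cases k
  exacts [hca, hcb, hca.mul_right hcb]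

theorem Commute.option_elim_triple (hca : Commute c a) (hcb : Commute c b)
    (ix : Option (Fin 3)) : Commute c (ix.elim 1 ![a, b, a * b]) := by
  cases ix with
  | none => exact Commute.one_right c
  | some k => exact hca.triple hcb k

end Triple

theorem commute_mul_add_mul_of_mul_self_eq_zero {R : Type*} [Semiring R] {a x : R}
    (ha : a * a = 0) : Commute (x * a + a * x) a := by
  simp only [Commute, SemiconjBy, add_mul, mul_add, mul_assoc, ha, ← mul_assoc a a, zero_mul,
    mul_zero, add_zero, zero_add]

theorem g_mul_g_of_rel {i j : Fin 5} {b : FA} (h : ARel (ι F2 i * ι F2 j) b) :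
    g i * g j = RingQuot.mkAlgHom F2 ARel b :=
  (map_mul _ _ _).symm.trans (RingQuot.mkAlgHom_rel F2 h)

theorem g_mul_g_eq_zero {i j : Fin 5} (h : ARel (ι F2 i * ι F2 j) 0) : g i * g j = 0 :=
  (g_mul_g_of_rel h).trans (map_zero _)

theorem commute_g_of_rel {i j : Fin 5} (h : ARel (ι F2 i * ι F2 j) (ι F2 j * ι F2 i)) :
    Commute (g i) (g j) :=
  (g_mul_g_of_rel h).trans (map_mul _ _ _)

theorem t_mul_t : t * t = 0 := g_mul_g_eq_zero ARel.t2

theorem commute_g_y (i : Fin 3) (j : Fin 2) :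
    Commute (g (Fin.castLE (by omega) i)) (g (3 + Fin.castLE (by omega) j)) :=
  commute_g_of_rel (ARel.ycentral i j)

theorem xOpt_mul_xg_eq_zero_or (ix : Option (Fin 3)) (k : Fin 3) :
    ix.elim 1 xg * xg k = 0 ∨ ∃ ix' : Option (Fin 3), ix.elim 1 xg * xg k = ix'.elim 1 xg :=
  Option.elim_triple_mul_eq_zero_or (g_mul_g_eq_zero ARel.x1sq)
    (g_mul_g_eq_zero ARel.x2sq) (commute_g_of_rel ARel.xcomm) ix k

theorem yOpt_mul_yg_eq_zero_or (jy : Option (Fin 3)) (k : Fin 3) :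
    jy.elim 1 yg * yg k = 0 ∨ ∃ jy' : Option (Fin 3), jy.elim 1 yg * yg k = jy'.elim 1 yg :=
  Option.elim_triple_mul_eq_zero_or (g_mul_g_eq_zero ARel.y1sq)
    (g_mul_g_eq_zero ARel.y2sq) (commute_g_of_rel ARel.ycomm) jy k

theorem tOpt_mul_t_eq_zero_or (et : Bool) :
    (if et then t else 1) * t = 0 ∨
      ∃ et' : Bool, (if et then t else 1) * t = if et' then t else 1 := by
  cases et
  · exact Or.inr ⟨true, one_mul t⟩
  · exact Or.inl t_mul_t

theorem commute_t_yOpt (jy : Option (Fin 3)) : Commute t (jy.elim 1 yg) :=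
  (commute_g_y 0 0).option_elim_triple (commute_g_y 0 1) jy

theorem commute_xg_yOpt (k : Fin 3) (jy : Option (Fin 3)) : Commute (xg k) (jy.elim 1 yg) :=
  (((commute_g_y 1 0).option_elim_triple (commute_g_y 1 1) jy).symm.triple
    ((commute_g_y 2 0).option_elim_triple (commute_g_y 2 1) jy).symm k).symm

theorem commute_w_tOpt (i : Fin 3) (et : Bool) : Commute (w i) (if et then t else 1) := by
  cases et
  · exact Commute.one_right _
  · exact commute_mul_add_mul_of_mul_self_eq_zero t_mul_t

theorem xg_mul_t (i : Fin 3) : xg i * t = w i + t * xg i := by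
  rw [w, add_assoc, add_self_eq_zero_of_zmod_two, add_zero]

theorem wWord_append_singleton (I : List (Fin 3)) (i : Fin 3) :
    wWord (I ++ [i]) = wWord I * w i := by
  simp [wWord]

def wMonomial (I : List (Fin 3)) (et : Bool) (ix jy : Option (Fin 3)) : A :=
  wWord I * (if et then t else 1) * ix.elim 1 xg * jy.elim 1 yg

def wSpan : Submodule F2 A :=
  Submodule.span F2 {a | ∃ I et ix jy, a = wMonomial I et ix jy}

theorem wMonomial_mem_wSpan (I : List (Fin 3)) (et : Bool) (ix jy : Option (Fin 3)) :
    wMonomial I et ix jy ∈ wSpan :=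
  Submodule.subset_span ⟨I, et, ix, jy, rfl⟩

theorem one_mem_wSpan : (1 : A) ∈ wSpan := by
  simpa [wMonomial, wWord] using wMonomial_mem_wSpan [] false none none

theorem wMonomial_mul_yg_mem (I : List (Fin 3)) (et : Bool) (ix jy : Option (Fin 3)) (k : Fin 3) :
    wMonomial I et ix jy * yg k ∈ wSpan := by
  rw [wMonomial, mul_assoc]
  rcases yOpt_mul_yg_eq_zero_or jy k with h | ⟨jy', h⟩ <;> rw [h]
  · simp
  · exact wMonomial_mem_wSpan I et ix jy'

theorem wMonomial_mul_xg_mem (I : List (Fin 3)) (et : Bool) (ix jy : Option (Fin 3)) (k : Fin 3) :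
    wMonomial I et ix jy * xg k ∈ wSpan := by
  rw [wMonomial, mul_assoc, ← (commute_xg_yOpt k jy).eq, ← mul_assoc, mul_assoc _ _ (xg k)]
  rcases xOpt_mul_xg_eq_zero_or ix k with h | ⟨ix', h⟩ <;> rw [h]
  · simp
  · exact wMonomial_mem_wSpan I et ix' jy

theorem wMonomial_mul_t_mem (I : List (Fin 3)) (et : Bool) (ix jy : Option (Fin 3)) :
    wMonomial I et ix jy * t ∈ wSpan := by
  have ht_mem (ix : Option (Fin 3)) :
      wWord I * ((if et then t else 1) * t) * ix.elim 1 xg * jy.elim 1 yg ∈ wSpan := by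
    rcases tOpt_mul_t_eq_zero_or et with h | ⟨et', h⟩ <;> rw [h]
    · simp
    · exact wMonomial_mem_wSpan I et' ix jy
  rw [wMonomial, mul_assoc, ← (commute_t_yOpt jy).eq, ← mul_assoc]
  cases ix with
  | none => simpa [mul_assoc] using ht_mem none
  | some i =>
    have hw : wWord I * (if et then t else 1) * w i * jy.elim 1 yg =
        wMonomial (I ++ [i]) et none jy := by
      rw [wMonomial, wWord_append_singleton, mul_assoc (wWord I), ← (commute_w_tOpt i et).eq]
      simp [mul_assoc]
    rw [Option.elim_some, mul_assoc _ (xg i), xg_mul_t, mul_add, add_mul]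
    refine wSpan.add_mem (hw ▸ wMonomial_mem_wSpan _ _ _ _) ?_
    simpa [mul_assoc] using ht_mem (some i)

theorem mul_g_mem_wSpan {a : A} (ha : a ∈ wSpan) (m : Fin 5) : a * g m ∈ wSpan := by
  suffices wSpan ≤ wSpan.comap (LinearMap.mulRight F2 (g m)) from this ha
  refine Submodule.span_le.2 ?_
  rintro _ ⟨I, et, ix, jy, rfl⟩
  fin_cases m
  · exact wMonomial_mul_t_mem I et ix jy
  · exact wMonomial_mul_xg_mem I et ix jy 0
  · exact wMonomial_mul_xg_mem I et ix jy 1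
  · exact wMonomial_mul_yg_mem I et ix jy 0
  · exact wMonomial_mul_yg_mem I et ix jy 1

/-- Lemma 2.5 of the paper: every element of `A` is a ℤ₂-linear
combination of elements of the form `w_I · t^{ε_t} · x_i^{ε_i} · y_j^{η_j}`,
where the optional factors `x_i` (resp. `y_j`) range over `x₁,x₂,x₃`
(resp. `y₁,y₂,y₃`), encoded by `Option (Fin 3)`. -/
theorem stmt_0 (a : A) :
    a ∈ Submodule.span F2 {a : A | ∃ (I : List (Fin 3)) (et : Bool)
      (ix jy : Option (Fin 3)),
      a = wWord I * (if et then t else 1) * (ix.elim 1 xg) * (jy.elim 1 yg)} := by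
  have hspan : wSpan = ⊤ :=
    Submodule.eq_top_of_one_mem_of_mul_mem (RingQuot.adjoin_range_mkAlgHom_ι ARel) one_mem_wSpan
      (by rintro b hb _ ⟨m, rfl⟩; exact mul_g_mem_wSpan hb m)
  exact (hspan ▸ Submodule.mem_top : a ∈ wSpan)
end
end

section
/- The subalgebra of A = Λ(y₁,y₂) ⊗ ℤ₂⟨t,x₁,x₂⟩/R (with R = (t², x₁², x₂², x₁x₂ - x₂x₁)) generated by the three elements w₁ = x₁t + tx₁, w₂ = x₂t + tx₂, w₃ = x₃t + tx₃ (with x₃ = x₁x₂) is a free noncommutative ℤ₂-algebra on these three generators; i.e., the distinct words in w₁, w₂, w₃ are linearly independent over ℤ₂. -/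
/-!
The ℤ₂-algebra `A = Λ(y₁,y₂) ⊗ ℤ₂⟨t,x₁,x₂⟩ / R` from Anjos,
"Homotopy type of symplectomorphism groups of S² × S²".
Generators of the free algebra: `0 ↦ t`, `1 ↦ x₁`, `2 ↦ x₂`, `3 ↦ y₁`, `4 ↦ y₂`.
Relations: `t² = x₁² = x₂² = 0`, `x₁x₂ = x₂x₁` (the ideal R), together with the
exterior-algebra relations `y₁² = y₂² = 0`, `y₁y₂ = y₂y₁` and the fact that the
`yᵢ` commute with `t, x₁, x₂` (tensor product).
-/

noncomputable section
open FreeAlgebra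

/-!
Let `A` act on the `ℤ₂`-span of the words `x_{i₁} t x_{i₂} t ⋯ x_{iₙ} t` and `t x_{i₁} t ⋯ x_{iₙ} t`
(`iₖ ∈ {1,2,3}`): `t` and `x₁, x₂` act by multiplying on the left and reducing with the relations
`t² = 0`, `xᵢ² = 0`, `x₁x₂ = x₂x₁ = x₃` (a product of any other shape is sent to `0`), and `y₁, y₂`
act by `0`. Because `t² = 0`, `wᵢ = xᵢt + txᵢ` sends `t x_{i₁} t ⋯` to `t xᵢ t x_{i₁} t ⋯`, so the
word `w_I` sends `t` to the basis vector `t x_{i₁} t ⋯ x_{iₙ} t`, and these are distinct for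
distinct `I`.
-/

section PartialOp

variable {R S : Type*} [Semiring R]

def partialOp (f : S → Option S) : Module.End R (S →₀ R) :=
  Finsupp.linearCombination R fun s => (f s).elim 0 fun s' => Finsupp.single s' 1

theorem partialOp_single (f : S → Option S) (s : S) :
    partialOp f (Finsupp.single s (1 : R)) = (f s).elim 0 fun s' => Finsupp.single s' 1 := by
  simp [partialOp]

theorem partialOp_mul (f g : S → Option S) :
    (partialOp f * partialOp g : Module.End R (S →₀ R)) = partialOp fun s => (g s).bind f := by
  refine Finsupp.lhom_ext' fun s => LinearMap.ext_ring ?_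
  simp only [LinearMap.comp_apply, Finsupp.lsingle_apply, Module.End.mul_apply, partialOp_single]
  cases g s <;> simp [partialOp_single]

theorem partialOp_none : (partialOp fun _ => none : Module.End R (S →₀ R)) = 0 :=
  Finsupp.lhom_ext' fun s => LinearMap.ext_ring (by simp [partialOp_single])

end PartialOp

/-- `x I` is the word `x_{i₁} t x_{i₂} t ⋯ x_{iₙ} t` and `tx I` the word `t x_{i₁} t ⋯ x_{iₙ} t`,
where the index `i : Fin 3` stands for `x_{i+1}`, as in `xg`. -/
inductive Word
  | x (I : List (Fin 3))
  | tx (I : List (Fin 3))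

namespace Word

def tStep : Word → Option Word
  | x I => some (tx I)
  | tx _ => none

/-- The only nonzero products of two `x`-letters are `x₁x₂ = x₂x₁ = x₃`. -/
def xStep (a : Fin 3) : Word → Option Word
  | tx I => some (x (a :: I))
  | x [] => none
  | x (b :: I) => if a.val + b.val = 1 then some (x (2 :: I)) else none

def tOp : Module.End F2 (Word →₀ F2) := partialOp tStep

def xOp (a : Fin 3) : Module.End F2 (Word →₀ F2) := partialOp (xStep a)

theorem tOp_mul_self : tOp * tOp = 0 := by
  rw [tOp, partialOp_mul, ← partialOp_none]
  congr; funext s; cases s; all_goals rfl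

theorem xOp_mul_self (a : Fin 3) : xOp a * xOp a = 0 := by
  rw [xOp, partialOp_mul, ← partialOp_none]
  congr; funext s
  rcases s with (_ | ⟨b, I⟩) | I
  · rfl
  · simp only [xStep]
    split_ifs <;> simp [xStep]
  · simp only [xStep, Option.bind_some, ite_eq_right_iff]
    omega

theorem xOp_mul_xOp_of_add_eq_one {a b : Fin 3} (h : a.val + b.val = 1) :
    xOp a * xOp b = xOp 2 := by
  rw [xOp, xOp, xOp, partialOp_mul]
  congr; funext s
  rcases s with (_ | ⟨c, I⟩) | I
  · rfl
  · simp only [xStep]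
    split_ifs <;> simp [xStep] <;> omega
  · simp [xStep, h]

end Word

open Word

def genOp : Fin 5 → Module.End F2 (Word →₀ F2) := ![tOp, xOp 0, xOp 1, 0, 0]

theorem lift_genOp_eq_of_ARel {a b : FA} (h : ARel a b) :
    FreeAlgebra.lift F2 genOp a = FreeAlgebra.lift F2 genOp b := by
  cases h <;> simp only [map_mul, map_zero, FreeAlgebra.lift_ι_apply]
  · exact tOp_mul_self
  · exact xOp_mul_self 0
  · exact xOp_mul_self 1
  · show xOp 0 * xOp 1 = xOp 1 * xOp 0
    rw [xOp_mul_xOp_of_add_eq_one rfl, xOp_mul_xOp_of_add_eq_one rfl]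
  case y1sq | y2sq | ycomm => simp [genOp]
  case ycentral j => fin_cases j <;> simp [genOp]

def ρ : A →ₐ[F2] Module.End F2 (Word →₀ F2) :=
  RingQuot.liftAlgHom F2 ⟨FreeAlgebra.lift F2 genOp, fun _ _ => lift_genOp_eq_of_ARel⟩

theorem ρ_g (i : Fin 5) : ρ (g i) = genOp i := by
  simp [ρ, g, RingQuot.liftAlgHom_mkAlgHom_apply]

theorem ρ_t : ρ t = tOp := ρ_g 0

theorem ρ_xg (i : Fin 3) : ρ (xg i) = xOp i := by
  fin_cases i
  · exact ρ_g 1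
  · exact ρ_g 2
  · show ρ (g 1 * g 2) = xOp 2
    rw [map_mul, ρ_g, ρ_g]
    exact xOp_mul_xOp_of_add_eq_one rfl

theorem ρ_w_single_tx (i : Fin 3) (I : List (Fin 3)) :
    ρ (w i) (Finsupp.single (tx I) 1) = Finsupp.single (tx (i :: I)) 1 := by
  simp [w, ρ_t, ρ_xg, tOp, xOp, partialOp_single, tStep, xStep]

theorem ρ_wWord_single_tx_nil (I : List (Fin 3)) :
    ρ (wWord I) (Finsupp.single (tx []) 1) = Finsupp.single (tx I) 1 := by
  induction I with
  | nil => simp [wWord]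
  | cons i I ih =>
    rw [wWord, List.map_cons, List.prod_cons, map_mul, Module.End.mul_apply, ← wWord, ih,
      ρ_w_single_tx]

/-- the distinct words in `w₁, w₂, w₃` are linearly independent
over ℤ₂, i.e. the subalgebra they generate is free noncommutative on these
three generators. -/
theorem stmt_3 : LinearIndependent F2 (fun I : List (Fin 3) => wWord I) := by
  refine .of_comp (LinearMap.applyₗ (Finsupp.single (tx []) 1) ∘ₗ ρ.toLinearMap) ?_
  convert (Finsupp.linearIndependent_single_one F2 Word).comp tx fun _ _ => tx.inj
    using 1
  exact funext ρ_wWord_single_tx_nil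
end
end
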